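/- For x ∈ Z[ω], 0 ≤ gde(|x|², √2) − 2·gde(x, √2) ≤ 1. -/

import Mathlib

/-!
Write `x = (√2)^k q` with `√2 ∤ q`; then `x x̄ = (√2)^(2k) q q̄`, which gives `2k ≤ m`.
If `m ≥ 2k + 2`, then `2 ∣ q q̄`. For `q = a + bω + cω² + dω³` one computes
`q q̄ = (a² + b² + c² + d²) + (ab + bc + cd - da)(ω - ω³)`, whose coefficients are congruent mod 2
to `(a + c) + (b + d)` and `(a + c)(b + d)`. Both being even forces `a + c` and `b + d` to be even,
which is exactly `√2 ∣ q`, a contradiction.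
-/

noncomputable section

open Complex

/-- The eighth root of unity ω = e^{iπ/4}. -/
def omg : ℂ := Complex.exp (Real.pi * Complex.I / 4)

/-- √2 as a complex number. -/
def rt2 : ℂ := (Real.sqrt 2 : ℝ)

/-- Membership in the ring Z[ω] = {a + bω + cω² + dω³ : a,b,c,d ∈ ℤ}. -/
def Zomega (z : ℂ) : Prop :=
  ∃ a b c d : ℤ, z = a + b * omg + c * omg ^ 2 + d * omg ^ 3

/-- Membership in the ring Z[1/√2, i] = {u/(√2)^n : u ∈ Z[ω], n ∈ ℕ}. -/
def ZRoot2i (z : ℂ) : Prop :=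
  ∃ u : ℂ, Zomega u ∧ ∃ n : ℕ, z = u / rt2 ^ n

/-- `b` divides `z` within the ring Z[ω]. -/
def ZDvd (b z : ℂ) : Prop := ∃ q : ℂ, Zomega q ∧ z = b * q

/-- `k` is the greatest dividing exponent of base `b` with respect to `z`:
`b^k` divides `z` in Z[ω], while `b^(k+1)` does not. -/
def IsGde (b z : ℂ) (k : ℕ) : Prop := ZDvd (b ^ k) z ∧ ¬ ZDvd (b ^ (k + 1)) z

/-- `k` is the smallest denominator exponent of base √2 with respect to `z`:
the smallest integer `k` such that `z·(√2)^k ∈ Z[ω]`. -/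
def IsSde (z : ℂ) (k : ℤ) : Prop :=
  Zomega (z * rt2 ^ k) ∧ ∀ j : ℤ, Zomega (z * rt2 ^ j) → k ≤ j

def omgComb (a b c d : ℤ) : ℂ := a + b * omg + c * omg ^ 2 + d * omg ^ 3

lemma zomega_iff (z : ℂ) : Zomega z ↔ ∃ a b c d : ℤ, z = omgComb a b c d := Iff.rfl

lemma rt2_sq : rt2 ^ 2 = 2 := by
  rw [rt2]; norm_cast; rw [Real.sq_sqrt]; norm_num

lemma rt2_ne_zero : rt2 ≠ 0 := by
  rw [rt2]; norm_cast; positivity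

lemma conj_rt2 : (starRingEnd ℂ) rt2 = rt2 := Complex.conj_ofReal _

lemma omg_eq : omg = ((Real.sqrt 2 / 2 : ℝ) : ℂ) + ((Real.sqrt 2 / 2 : ℝ) : ℂ) * I := by
  rw [omg, show (Real.pi : ℂ) * I / 4 = ((Real.pi / 4 : ℝ) : ℂ) * I by push_cast; ring,
    Complex.exp_mul_I, ← Complex.ofReal_cos, ← Complex.ofReal_sin,
    Real.cos_pi_div_four, Real.sin_pi_div_four]

lemma omg_sq : omg ^ 2 = I := by
  have h2 : ((Real.sqrt 2 : ℝ) : ℂ) ^ 2 = 2 := rt2_sq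
  rw [omg_eq]; push_cast
  linear_combination (I / 2) * h2 + (((Real.sqrt 2 : ℝ) : ℂ) ^ 2 / 4) * Complex.I_sq

lemma omg_cube : omg ^ 3 = -((Real.sqrt 2 / 2 : ℝ) : ℂ) + ((Real.sqrt 2 / 2 : ℝ) : ℂ) * I := by
  rw [pow_succ, omg_sq, omg_eq]
  push_cast
  linear_combination (((Real.sqrt 2 : ℝ) : ℂ) / 2) * Complex.I_sq

lemma omg_pow_four : omg ^ 4 = -1 := by
  rw [show omg ^ 4 = (omg ^ 2) ^ 2 by ring, omg_sq, Complex.I_sq]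

lemma rt2_eq_omg_sub_omg_cube : rt2 = omg - omg ^ 3 := by
  rw [rt2, omg_cube, omg_eq]; push_cast; ring

lemma conj_omg : (starRingEnd ℂ) omg = -omg ^ 3 := by
  rw [omg_cube, omg_eq, map_add, map_mul, Complex.conj_ofReal, Complex.conj_I]
  ring

lemma omgComb_mul (a b c d a' b' c' d' : ℤ) :
    omgComb a b c d * omgComb a' b' c' d' =
      omgComb (a * a' - b * d' - c * c' - d * b') (a * b' + b * a' - c * d' - d * c')
        (a * c' + b * b' + c * a' - d * d') (a * d' + b * c' + c * b' + d * a') := by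
  unfold omgComb
  push_cast
  linear_combination
    ((b : ℂ) * d' + c * c' + d * b' + (c * d' + d * c') * omg + d * d' * omg ^ 2) * omg_pow_four

lemma conj_omgComb (a b c d : ℤ) :
    (starRingEnd ℂ) (omgComb a b c d) = omgComb a (-d) (-c) (-b) := by
  simp only [omgComb, map_add, map_mul, map_pow, map_intCast, conj_omg]
  push_cast
  linear_combination ((c : ℂ) * omg ^ 2 - d * omg ^ 5 + d * omg) * omg_pow_four

lemma omgComb_mul_conj (a b c d : ℤ) :
    omgComb a b c d * (starRingEnd ℂ) (omgComb a b c d) =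
      omgComb (a ^ 2 + b ^ 2 + c ^ 2 + d ^ 2) (a * b + b * c + c * d - d * a) 0
        (-(a * b + b * c + c * d - d * a)) := by
  rw [conj_omgComb, omgComb_mul]
  congr 1 <;> ring

lemma rt2_mul_omgComb (a b c d : ℤ) :
    rt2 * omgComb a b c d = omgComb (b - d) (a + c) (b + d) (c - a) := by
  rw [rt2_eq_omg_sub_omg_cube]
  unfold omgComb
  push_cast
  linear_combination ((d : ℂ) - b - c * omg - d * omg ^ 2) * omg_pow_four

lemma int_eq_zero_of_add_mul_sqrt_two_eq_zero {p q : ℤ} (h : (p : ℝ) + q * Real.sqrt 2 = 0) :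
    p = 0 ∧ q = 0 := by
  obtain rfl | hq := eq_or_ne q 0
  · exact ⟨by simpa using h, rfl⟩
  · exact ((irrational_sqrt_two.intCast_mul hq).intCast_add p).ne_zero h |>.elim

lemma omgComb_eq_zero {a b c d : ℤ} (h : omgComb a b c d = 0) :
    a = 0 ∧ b = 0 ∧ c = 0 ∧ d = 0 := by
  rw [omgComb, omg_sq, omg_cube, omg_eq] at h
  have hre := congrArg Complex.re h
  have him := congrArg Complex.im h
  simp only [ofReal_div, ofReal_ofNat, add_re, intCast_re, mul_re, div_ofNat_re, ofReal_re, I_re,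
    mul_zero, div_ofNat_im, ofReal_im, zero_div, I_im, mul_one, sub_self, add_zero, intCast_im,
    add_im, mul_im, zero_add, zero_mul, sub_zero, neg_re, mul_neg, neg_im, neg_zero, zero_re,
    zero_im] at hre him
  obtain ⟨ha, hbd⟩ := int_eq_zero_of_add_mul_sqrt_two_eq_zero (p := 2 * a) (q := b - d)
    (by push_cast; linarith)
  obtain ⟨hc, hbd'⟩ := int_eq_zero_of_add_mul_sqrt_two_eq_zero (p := 2 * c) (q := b + d)
    (by push_cast; linarith)
  omega

lemma omgComb_injective {a b c d a' b' c' d' : ℤ}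
    (h : omgComb a b c d = omgComb a' b' c' d') : a = a' ∧ b = b' ∧ c = c' ∧ d = d' := by
  have h0 : omgComb (a - a') (b - b') (c - c') (d - d') = 0 := by
    unfold omgComb at h ⊢; push_cast; linear_combination h
  obtain ⟨h1, h2, h3, h4⟩ := omgComb_eq_zero h0
  omega

namespace Zomega

lemma one : Zomega 1 := ⟨1, 0, 0, 0, by push_cast; ring⟩

lemma rt2 : Zomega rt2 := ⟨0, 1, 0, -1, by rw [rt2_eq_omg_sub_omg_cube]; push_cast; ring⟩

lemma mul {z w : ℂ} (hz : Zomega z) (hw : Zomega w) : Zomega (z * w) := by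
  obtain ⟨a, b, c, d, rfl⟩ := hz
  obtain ⟨a', b', c', d', rfl⟩ := hw
  exact ⟨_, _, _, _, omgComb_mul a b c d a' b' c' d'⟩

lemma pow {z : ℂ} (hz : Zomega z) (n : ℕ) : Zomega (z ^ n) := by
  induction n with
  | zero => simpa using one
  | succ n ih => rw [pow_succ]; exact ih.mul hz

lemma mul_conj {z : ℂ} (hz : Zomega z) : Zomega (z * (starRingEnd ℂ) z) := by
  obtain ⟨a, b, c, d, rfl⟩ := hz
  exact ⟨_, _, _, _, omgComb_mul_conj a b c d⟩

end Zomega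

lemma ZDvd.pow_of_le {b z : ℂ} {i j : ℕ} (hb : Zomega b) (hji : j ≤ i) (h : ZDvd (b ^ i) z) :
    ZDvd (b ^ j) z := by
  obtain ⟨q, hq, rfl⟩ := h
  refine ⟨b ^ (i - j) * q, (hb.pow _).mul hq, ?_⟩
  rw [← mul_assoc, ← pow_add, Nat.add_sub_cancel' hji]

namespace IsGde

variable {b z : ℂ} {m j : ℕ}

lemma le_of_zdvd (hm : IsGde b z m) (hb : Zomega b) (h : ZDvd (b ^ j) z) : j ≤ m := by
  by_contra! hlt
  exact hm.2 (h.pow_of_le hb hlt)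

lemma zdvd_of_le (hm : IsGde b z m) (hb : Zomega b) (hj : j ≤ m) : ZDvd (b ^ j) z :=
  hm.1.pow_of_le hb hj

end IsGde

lemma zdvd_rt2_omgComb {a b c d : ℤ} (hac : 2 ∣ a + c) (hbd : 2 ∣ b + d) :
    ZDvd rt2 (omgComb a b c d) := by
  obtain ⟨e, he⟩ := hac
  obtain ⟨g, hg⟩ := hbd
  refine ⟨omgComb (b - g) e g (c - e), ⟨_, _, _, _, rfl⟩, ?_⟩
  rw [rt2_mul_omgComb]
  congr 1 <;> omega

lemma two_dvd_of_two_dvd_norm_coeffs {a b c d : ℤ} (h₀ : 2 ∣ a ^ 2 + b ^ 2 + c ^ 2 + d ^ 2)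
    (h₁ : 2 ∣ a * b + b * c + c * d - d * a) : 2 ∣ a + c ∧ 2 ∣ b + d := by
  have two_dvd_iff (n : ℤ) : 2 ∣ n ↔ (n : ZMod 2) = 0 := by
    simpa using (ZMod.intCast_zmod_eq_zero_iff_dvd n 2).symm
  simp only [two_dvd_iff, Int.cast_add, Int.cast_sub, Int.cast_mul, Int.cast_pow] at h₀ h₁ ⊢
  generalize (a : ZMod 2) = a', (b : ZMod 2) = b', (c : ZMod 2) = c', (d : ZMod 2) = d' at *
  revert a' b' c' d'
  decide

lemma zdvd_rt2_of_mul_conj_eq_two_mul {q w : ℂ} (hq : Zomega q) (hw : Zomega w)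
    (h : q * (starRingEnd ℂ) q = 2 * w) : ZDvd rt2 q := by
  obtain ⟨a, b, c, d, rfl⟩ := (zomega_iff q).1 hq
  obtain ⟨A, B, C, D, rfl⟩ := (zomega_iff w).1 hw
  have h2w : 2 * omgComb A B C D = omgComb (2 * A) (2 * B) (2 * C) (2 * D) := by
    unfold omgComb; push_cast; ring
  rw [omgComb_mul_conj, h2w] at h
  obtain ⟨h₀, h₁, -, -⟩ := omgComb_injective h
  obtain ⟨hac, hbd⟩ := two_dvd_of_two_dvd_norm_coeffs ⟨A, h₀⟩ ⟨B, h₁⟩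
  exact zdvd_rt2_omgComb hac hbd

theorem stmt6_general (x : ℂ) (k m : ℕ)
    (hk : IsGde rt2 x k) (hm : IsGde rt2 (x * (starRingEnd ℂ) x) m) :
    2 * k ≤ m ∧ m ≤ 2 * k + 1 := by
  obtain ⟨⟨q, hq, rfl⟩, hk'⟩ := hk
  have hfac : rt2 ^ k * q * (starRingEnd ℂ) (rt2 ^ k * q) =
      rt2 ^ (2 * k) * (q * (starRingEnd ℂ) q) := by
    rw [map_mul, map_pow, conj_rt2]; ring
  refine ⟨hm.le_of_zdvd Zomega.rt2 ⟨_, hq.mul_conj, hfac⟩, ?_⟩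
  by_contra! hlt
  obtain ⟨w, hw, hxw⟩ := hm.zdvd_of_le Zomega.rt2 (j := 2 * k + 2) (by omega)
  have hqw : q * (starRingEnd ℂ) q = 2 * w := by
    refine mul_left_cancel₀ (pow_ne_zero (2 * k) rt2_ne_zero) ?_
    rw [← hfac, hxw, pow_add, rt2_sq, mul_assoc]
  obtain ⟨r, hr, rfl⟩ := zdvd_rt2_of_mul_conj_eq_two_mul hq hw hqw
  exact hk' ⟨r, hr, by ring⟩

/-- For x ∈ Z[ω], 0 ≤ gde(|x|², √2) − 2·gde(x, √2) ≤ 1. -/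
theorem stmt6 (x : ℂ) (hx : Zomega x) (hx0 : x ≠ 0) (k m : ℕ)
    (hk : IsGde rt2 x k) (hm : IsGde rt2 (x * (starRingEnd ℂ) x) m) :
    2 * k ≤ m ∧ m ≤ 2 * k + 1 :=
  stmt6_general x k m hk hm
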